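/- arXiv:2209.12976 — 3 statements merged into one kernel-verified Lean document; each statement's English description precedes it below -/
import Mathlib

section
/- Let K ≥ 1, let t ∈ {1,…,K}, and fix positive reals R_k > 0 for all k ≠ t. Then the function r ↦ g_K(R_1,…,R_{t-1}, r, R_{t+1},…,R_K) is convex on the interval (0,∞). -/
/-
Slice the region along coordinate `t` (Fubini). For fixed positive values `w` of the other
coordinates, with `s(w) = ∑_{k ≠ t} log₂(1 + w_k) / R_k`, the slice is the interval
`(0, 2^(r (1 - s(w))) - 1)`, so the volume is the integral over `w` of
`max (2^(r (1 - s(w))) - 1) 0`. Each integrand is convex in `r`, and integration preserves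
convexity as long as the integrals are finite, which holds because the region lies in the box
`∏_k (0, 2^(R_k) - 1)`.
-/

open MeasureTheory

/-- `gK K R` is the `K`-dimensional Lebesgue volume of the region
`{ t ∈ (0,∞)^K : Σ_k log₂(1 + t_k) / R_k < 1 }`. -/
noncomputable def gK (K : ℕ) (R : Fin K → ℝ) : ℝ :=
  (volume {t : Fin K → ℝ |
    (∀ k, 0 < t k) ∧ ∑ k, Real.logb 2 (1 + t k) / R k < 1}).toReal

open Real Set ENNReal

theorem ConvexOn.toReal_lintegral_ofReal {E α : Type*} [AddCommMonoid E] [Module ℝ E]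
    [MeasurableSpace α] {μ : Measure α} {s : Set E} {f : E → α → ℝ} (hs : Convex ℝ s)
    (hconv : ∀ z, ConvexOn ℝ s (f · z)) (hmeas : ∀ x ∈ s, AEMeasurable (f x) μ)
    (hfin : ∀ x ∈ s, ∫⁻ z, ENNReal.ofReal (f x z) ∂μ ≠ ∞) :
    ConvexOn ℝ s fun x => (∫⁻ z, ENNReal.ofReal (f x z) ∂μ).toReal := by
  refine ⟨hs, fun x hx y hy a b ha hb hab => ?_⟩
  set I := fun x => ∫⁻ z, ENNReal.ofReal (f x z) ∂μ
  have hpoint : ∀ z, ENNReal.ofReal (f (a • x + b • y) z)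
      ≤ ENNReal.ofReal a * ENNReal.ofReal (f x z) + ENNReal.ofReal b * ENNReal.ofReal (f y z) :=
    fun z => calc
      _ ≤ ENNReal.ofReal (a * f x z + b * f y z) :=
        ENNReal.ofReal_le_ofReal ((hconv z).2 hx hy ha hb hab)
      _ ≤ ENNReal.ofReal (a * f x z) + ENNReal.ofReal (b * f y z) := ENNReal.ofReal_add_le
      _ = _ := by rw [ENNReal.ofReal_mul ha, ENNReal.ofReal_mul hb]
  have hint : I (a • x + b • y) ≤ ENNReal.ofReal a * I x + ENNReal.ofReal b * I y :=
    calc I (a • x + b • y)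
        ≤ ∫⁻ z, ENNReal.ofReal a * ENNReal.ofReal (f x z)
            + ENNReal.ofReal b * ENNReal.ofReal (f y z) ∂μ := lintegral_mono hpoint
      _ = ENNReal.ofReal a * I x + ENNReal.ofReal b * I y := by
        rw [lintegral_add_left' (((hmeas x hx).ennreal_ofReal).const_mul _),
          lintegral_const_mul' _ _ ofReal_ne_top, lintegral_const_mul' _ _ ofReal_ne_top]
  have hfin' : ∀ c, ∀ x ∈ s, ENNReal.ofReal c * I x ≠ ∞ :=
    fun c x hx => mul_ne_top ofReal_ne_top (hfin x hx)
  calc (I (a • x + b • y)).toReal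
      ≤ (ENNReal.ofReal a * I x + ENNReal.ofReal b * I y).toReal :=
        toReal_mono (add_ne_top.2 ⟨hfin' a x hx, hfin' b y hy⟩) hint
    _ = a * (I x).toReal + b * (I y).toReal := by
        rw [toReal_add (hfin' a x hx) (hfin' b y hy), toReal_mul, toReal_mul,
          toReal_ofReal ha, toReal_ofReal hb]

theorem volume_eq_lintegral_volume_insertNth {α : Type*} [MeasureSpace α]
    [SigmaFinite (volume : Measure α)] {n : ℕ} (i : Fin (n + 1)) {S : Set (Fin (n + 1) → α)}
    (hS : MeasurableSet S) :
    volume S = ∫⁻ w : Fin n → α, volume ((fun x => i.insertNth x w) ⁻¹' S) := by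
  have he := (measurePreserving_piFinSuccAbove (fun _ : Fin (n + 1) => (volume : Measure α)) i)
  rw [volume_pi, ← he.symm.measure_preimage_equiv S,
    Measure.prod_apply_symm ((MeasurableEquiv.piFinSuccAbove _ i).symm.measurable hS)]
  rfl

theorem convexOn_rpow_left_mul_sub {b : ℝ} (hb : 0 < b) (c d : ℝ) :
    ConvexOn ℝ univ fun r : ℝ => b ^ (r * c) - d := by
  refine (((convexOn_rpow_left hb).comp_linearMap (LinearMap.mulRight ℝ c)).add_const
    (-d)).congr fun r _ => ?_
  simp [sub_eq_add_neg]

@[fun_prop]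
theorem Measurable.logb {α : Type*} [MeasurableSpace α] {f : α → ℝ} (hf : Measurable f) (b : ℝ) :
    Measurable fun x => Real.logb b (f x) := by
  unfold Real.logb; fun_prop

theorem measurableSet_setOf_forall_pos (ι : Type*) [Countable ι] :
    MeasurableSet {p : ι → ℝ | ∀ k, 0 < p k} :=
  measurableSet_setOfPred.2 <| Measurable.forall fun k => measurableSet_setOfPred.1 <|
    measurableSet_lt measurable_const (measurable_pi_apply k)

def gKRegion (K : ℕ) (R : Fin K → ℝ) : Set (Fin K → ℝ) :=
  {t | (∀ k, 0 < t k) ∧ ∑ k, logb 2 (1 + t k) / R k < 1}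

theorem gK_eq_toReal_volume_gKRegion (K : ℕ) (R : Fin K → ℝ) :
    gK K R = (volume (gKRegion K R)).toReal :=
  rfl

theorem measurableSet_gKRegion (K : ℕ) (R : Fin K → ℝ) : MeasurableSet (gKRegion K R) :=
  (measurableSet_setOf_forall_pos _).inter
    (measurableSet_lt (f := fun p : Fin K → ℝ => ∑ k, logb 2 (1 + p k) / R k) (by fun_prop)
      measurable_const)

theorem gKRegion_subset_pi {K : ℕ} {R : Fin K → ℝ} (hR : ∀ k, 0 < R k) :
    gKRegion K R ⊆ univ.pi fun k => Ioo 0 ((2 : ℝ) ^ R k - 1) := by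
  rintro p ⟨hp, hsum⟩ k -
  have hterm : ∀ j, 0 ≤ logb 2 (1 + p j) / R j := fun j =>
    div_nonneg (logb_nonneg one_lt_two (by linarith [hp j])) (hR j).le
  have hk : logb 2 (1 + p k) / R k < 1 :=
    (Finset.single_le_sum (fun j _ => hterm j) (Finset.mem_univ k)).trans_lt hsum
  rw [div_lt_one (hR k), logb_lt_iff_lt_rpow one_lt_two (by linarith [hp k])] at hk
  exact ⟨hp k, by linarith⟩

theorem volume_gKRegion_ne_top {K : ℕ} {R : Fin K → ℝ} (hR : ∀ k, 0 < R k) :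
    volume (gKRegion K R) ≠ ∞ := by
  refine ((measure_mono (gKRegion_subset_pi hR)).trans_lt ?_).ne
  rw [volume_pi_pi]
  exact prod_lt_top fun _ _ => by simp

theorem insertNth_mem_gKRegion_update_iff {n : ℕ} (i : Fin (n + 1)) (R : Fin (n + 1) → ℝ)
    {r : ℝ} (hr : 0 < r) (x : ℝ) (w : Fin n → ℝ) :
    i.insertNth x w ∈ gKRegion (n + 1) (Function.update R i r) ↔ (∀ j, 0 < w j) ∧ 0 < x ∧
      x < (2 : ℝ) ^ (r * (1 - ∑ j, logb 2 (1 + w j) / R (i.succAbove j))) - 1 := by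
  simp only [gKRegion, mem_ofPred_eq, Fin.forall_iff_succAbove i, Fin.sum_univ_succAbove _ i,
    Fin.insertNth_apply_same, Fin.insertNth_apply_succAbove, Function.update_self,
    Function.update_of_ne (Fin.succAbove_ne i _)]
  set c := ∑ j, logb 2 (1 + w j) / R (i.succAbove j)
  have hlt_iff (hx : 0 < x) : logb 2 (1 + x) / r + c < 1 ↔ x < 2 ^ (r * (1 - c)) - 1 := by
    rw [← lt_sub_iff_add_lt, div_lt_iff₀' hr, logb_lt_iff_lt_rpow one_lt_two (by linarith)]
    constructor <;> intro <;> linarith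
  constructor
  · rintro ⟨⟨hx, hw⟩, h⟩
    exact ⟨hw, hx, (hlt_iff hx).1 h⟩
  · rintro ⟨hw, hx, h⟩
    exact ⟨⟨hx, hw⟩, (hlt_iff hx).2 h⟩

theorem volume_gKRegion_update {n : ℕ} (i : Fin (n + 1)) (R : Fin (n + 1) → ℝ) {r : ℝ}
    (hr : 0 < r) :
    volume (gKRegion (n + 1) (Function.update R i r)) = ∫⁻ w in {w : Fin n → ℝ | ∀ j, 0 < w j},
      ENNReal.ofReal ((2 : ℝ) ^ (r * (1 - ∑ j, logb 2 (1 + w j) / R (i.succAbove j))) - 1) := by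
  rw [volume_eq_lintegral_volume_insertNth i (measurableSet_gKRegion _ _),
    ← lintegral_indicator (measurableSet_setOf_forall_pos _)]
  refine lintegral_congr fun w => ?_
  by_cases hw : ∀ j, 0 < w j
  · rw [indicator_of_mem (s := {w : Fin n → ℝ | ∀ j, 0 < w j}) hw,
      ← sub_zero ((2 : ℝ) ^ _ - 1), ← Real.volume_Ioo]
    congr 1 with x
    simp [insertNth_mem_gKRegion_update_iff i R hr, hw]
  · rw [indicator_of_notMem (s := {w : Fin n → ℝ | ∀ j, 0 < w j}) hw,
      ← measure_empty (μ := (volume : Measure ℝ))]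
    congr 1 with x
    simp [insertNth_mem_gKRegion_update_iff i R hr, hw]

theorem gK_convex_in_each_arg_general (K : ℕ) (t : Fin K) (R : Fin K → ℝ)
    (hR : ∀ k, k ≠ t → 0 < R k) :
    ConvexOn ℝ (Set.Ioi (0 : ℝ)) (fun r => gK K (Function.update R t r)) := by
  cases K with
  | zero => exact t.elim0
  | succ n =>
  have hvol (r : ℝ) (hr : r ∈ Ioi 0) := volume_gKRegion_update t R hr
  have hupdate (r : ℝ) (hr : r ∈ Ioi 0) : ∀ k, 0 < Function.update R t r k :=
    Function.forall_update_iff _ (p := fun _ x => 0 < x) |>.2 ⟨hr, hR⟩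
  refine (ConvexOn.toReal_lintegral_ofReal (μ := volume.restrict {w : Fin n → ℝ | ∀ j, 0 < w j})
    (f := fun r w => 2 ^ (r * (1 - ∑ j, logb 2 (1 + w j) / R (t.succAbove j))) - 1)
    (convex_Ioi 0)
    (fun w => (convexOn_rpow_left_mul_sub two_pos _ 1).subset (subset_univ _) (convex_Ioi 0))
    (fun r _ => Measurable.aemeasurable (by fun_prop)) fun r hr => ?_).congr fun r hr => ?_
  · exact hvol r hr ▸ volume_gKRegion_ne_top (hupdate r hr)
  · rw [gK_eq_toReal_volume_gKRegion, hvol r hr]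

theorem gK_convex_in_each_arg (K : ℕ) (hK : 1 ≤ K) (t : Fin K) (R : Fin K → ℝ)
    (hR : ∀ k, k ≠ t → 0 < R k) :
    ConvexOn ℝ (Set.Ioi (0 : ℝ)) (fun r => gK K (Function.update R t r)) :=
  gK_convex_in_each_arg_general K t R hR
end

section
/- Let K ≥ 1 and let R_1,…,R_K be positive reals that are pairwise distinct. Then g_K(R_1,…,R_K) = (−1)^K + Σ_{p=1}^K 2^{R_p} · Π_{k=1, k≠p}^K R_k/(R_p − R_k). In particular, the K-dimensional volume of the region { t ∈ (0,∞)^K : Σ_{k=1}^K log₂(1+t_k)/R_k < 1 } admits this closed form. -/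
/-!
Slice the region along its first coordinate `t₀ = x`. The slice is empty unless
`0 < x < 2 ^ R₀ - 1`, and then it is the same kind of region in one dimension less, for the
parameters `c R₁, …, c R_{K-1}` with `c = 1 - log₂ (1 + x) / R₀`. The coefficients
`∏_{k ≠ p} R_k / (R_p - R_k)` are invariant under this scaling and
`2 ^ (c R_p) = 2 ^ R_p (1 + x) ^ (-R_p / R₀)`, so by induction the slice volume is a sum of
powers of `1 + x`, which integrates in closed form. The coefficient of `2 ^ R₀` in the result is
identified by `∑_p ∏_{k ≠ p} R_k / (R_p - R_k) = (-1) ^ (K - 1)`: this is the identity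
`∑_p ℓ_p = 1` for the Lagrange basis polynomials at the nodes `R_k`, evaluated at `0`.
-/

open MeasureTheory Finset

theorem Fin.prod_univ_erase_succ {M : Type*} [CommMonoid M] {n : ℕ} (f : Fin (n + 1) → M)
    (p : Fin n) : ∏ k ∈ univ.erase p.succ, f k = f 0 * ∏ k ∈ univ.erase p, f k.succ := by
  have : univ.erase p.succ = ((univ.erase p).map (Fin.succEmb n)).cons 0 (by simp) := by
    ext k; cases k using Fin.cases <;> simp [(Fin.succ_ne_zero p).symm]
  rw [this, Finset.prod_cons, prod_map]
  rfl

section LagrangeCoeff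

variable {ι F : Type*} [Fintype ι] [DecidableEq ι] [Field F]

def lagrangeCoeff (R : ι → F) (p : ι) : F :=
  ∏ k ∈ univ.erase p, R k / (R p - R k)

theorem lagrangeCoeff_smul {c : F} (hc : c ≠ 0) (R : ι → F) (p : ι) :
    lagrangeCoeff (c • R) p = lagrangeCoeff R p :=
  prod_congr rfl fun k _ => by
    simp only [Pi.smul_apply, smul_eq_mul, ← mul_sub, mul_div_mul_left _ _ hc]

open Polynomial in
theorem sum_lagrangeCoeff [Nonempty ι] {R : ι → F} (hR : Function.Injective R) :
    ∑ p, lagrangeCoeff R p = (-1) ^ (Fintype.card ι - 1) := by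
  set s : F := (-1) ^ (Fintype.card ι - 1)
  have hs : s * s = 1 := by rw [← mul_pow, neg_one_mul, neg_neg, one_pow]
  have eval_basis : ∀ p, (Lagrange.basis univ R p).eval 0 = s * lagrangeCoeff R p := by
    intro p
    have hsign : s = ∏ _k ∈ univ.erase p, (-1 : F) := by
      rw [prod_const, card_erase_of_mem (mem_univ p), card_univ]
    rw [Lagrange.basis, eval_prod, lagrangeCoeff, hsign, ← prod_mul_distrib]
    refine prod_congr rfl fun k _ => ?_
    simp only [Lagrange.basisDivisor, eval_mul, eval_C, eval_sub, eval_X]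
    ring
  have hsum := congrArg (eval 0) (Lagrange.sum_basis (s := univ) hR.injOn univ_nonempty)
  simp only [eval_finsetSum, eval_one, eval_basis, ← mul_sum] at hsum
  linear_combination s * hsum - (∑ p, lagrangeCoeff R p) * hs

end LagrangeCoeff

theorem lagrangeCoeff_succ {F : Type*} [Field F] {n : ℕ} (R : Fin (n + 1) → F) (p : Fin n) :
    lagrangeCoeff R p.succ = R 0 / (R p.succ - R 0) * lagrangeCoeff (Fin.tail R) p :=
  Fin.prod_univ_erase_succ _ p

noncomputable def closedForm {K : ℕ} (R : Fin K → ℝ) : ℝ :=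
  (-1) ^ K + ∑ p, (2 : ℝ) ^ R p * lagrangeCoeff R p

open Real

theorem logb_two_one_add_lt_iff {x r : ℝ} (hx : -1 < x) :
    logb 2 (1 + x) < r ↔ x < 2 ^ r - 1 := by
  rw [logb_lt_iff_lt_rpow one_lt_two (by linarith)]
  constructor <;> intro h <;> linarith

theorem one_sub_logb_two_one_add_div_pos {x r : ℝ} (hr : 0 < r)
    (hx : x ∈ Set.Ioo 0 (2 ^ r - 1)) : 0 < 1 - logb 2 (1 + x) / r := by
  rw [sub_pos, div_lt_one hr, logb_two_one_add_lt_iff (by linarith [hx.1])]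
  exact hx.2

theorem logb_two_one_add_div_nonneg {t r : ℝ} (ht : 0 < t) (hr : 0 < r) :
    0 ≤ logb 2 (1 + t) / r :=
  div_nonneg (logb_nonneg one_lt_two (by linarith)) hr.le

section Region

variable {ι : Type*} [Fintype ι]

def region (R : ι → ℝ) : Set (ι → ℝ) :=
  {t | (∀ k, 0 < t k) ∧ ∑ k, logb 2 (1 + t k) / R k < 1}

theorem measurableSet_region (R : ι → ℝ) : MeasurableSet (region R) := by
  simp only [region, Set.ofPred_and, Set.ofPred_forall]
  refine (MeasurableSet.iInter fun k => measurableSet_lt measurable_const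
    (measurable_pi_apply k)).inter (measurableSet_lt ?_ measurable_const)
  simp only [logb]
  fun_prop

theorem region_subset_pi {R : ι → ℝ} (hR : ∀ k, 0 < R k) :
    region R ⊆ Set.univ.pi fun k => Set.Ioo 0 (2 ^ R k - 1) := by
  rintro t ⟨ht, hsum⟩ k -
  have hk : logb 2 (1 + t k) / R k < 1 := by
    refine lt_of_le_of_lt ?_ hsum
    exact single_le_sum (f := fun k => logb 2 (1 + t k) / R k)
      (fun j _ => logb_two_one_add_div_nonneg (ht j) (hR j)) (mem_univ k)
  exact ⟨ht k, (logb_two_one_add_lt_iff (by linarith [ht k])).1 ((div_lt_one (hR k)).1 hk)⟩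

theorem volume_region_lt_top {R : ι → ℝ} (hR : ∀ k, 0 < R k) : volume (region R) < ⊤ :=
  (measure_mono (region_subset_pi hR)).trans_lt <| by
    simp [volume_pi_pi, ENNReal.prod_lt_top]

theorem volume_region_of_isEmpty [IsEmpty ι] (R : ι → ℝ) : volume (region R) = 1 := by
  have : region R = Set.univ := by ext t; simp [region]
  simp [this, volume_pi]

theorem region_smul {c : ℝ} (hc : 0 < c) (R : ι → ℝ) :
    region (c • R) = {t | (∀ k, 0 < t k) ∧ ∑ k, logb 2 (1 + t k) / R k < c} := by
  have hsum : ∀ t : ι → ℝ,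
      ∑ k, logb 2 (1 + t k) / (c * R k) = (∑ k, logb 2 (1 + t k) / R k) / c := fun t => by
    rw [sum_div]
    exact sum_congr rfl fun k _ => by rw [div_div, mul_comm]
  ext t
  simp only [region, Set.mem_ofPred_eq, Pi.smul_apply, smul_eq_mul, hsum, div_lt_one hc]

end Region

section Slicing

variable {n : ℕ}

theorem volume_region_eq_lintegral (R : Fin (n + 1) → ℝ) :
    volume (region R) =
      ∫⁻ x, volume {y | (Fin.cons x y : Fin (n + 1) → ℝ) ∈ region R} := by
  have hcons := (volume_preserving_piFinSuccAbove (fun _ : Fin (n + 1) => ℝ) 0).symm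
  rw [← hcons.measure_preimage (measurableSet_region R).nullMeasurableSet,
    Measure.volume_eq_prod, Measure.prod_apply (hcons.measurable (measurableSet_region R))]
  simp only [MeasurableEquiv.piFinSuccAbove_symm_apply, Fin.insertNthEquiv_zero]
  rfl

theorem setOf_cons_mem_region {R : Fin (n + 1) → ℝ} (hR : ∀ k, 0 < R k) {x : ℝ}
    (hx : x ∈ Set.Ioo 0 (2 ^ R 0 - 1)) :
    {y | (Fin.cons x y : Fin (n + 1) → ℝ) ∈ region R} =
      region ((1 - logb 2 (1 + x) / R 0) • Fin.tail R) := by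
  have hc := one_sub_logb_two_one_add_div_pos (hR 0) hx
  rw [region_smul hc]
  ext y
  simp only [region, Set.mem_ofPred_eq, Fin.forall_fin_succ, Fin.cons_zero,
    Fin.cons_succ, Fin.sum_univ_succ, Fin.tail, hx.1, true_and, lt_sub_iff_add_lt']

theorem setOf_cons_mem_region_eq_empty {R : Fin (n + 1) → ℝ} (hR : ∀ k, 0 < R k) {x : ℝ}
    (hx : x ∉ Set.Ioo 0 (2 ^ R 0 - 1)) :
    {y | (Fin.cons x y : Fin (n + 1) → ℝ) ∈ region R} = ∅ := by
  refine Set.eq_empty_of_forall_notMem fun y hy => hx ?_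
  simp only [region, Set.mem_ofPred_eq, Fin.forall_fin_succ, Fin.cons_zero, Fin.cons_succ,
    Fin.sum_univ_succ] at hy
  obtain ⟨⟨hx0, hy⟩, hsum⟩ := hy
  refine ⟨hx0, ?_⟩
  rw [← logb_two_one_add_lt_iff (by linarith), ← div_lt_one (hR 0)]
  linarith [sum_nonneg fun k (_ : k ∈ Finset.univ) =>
    logb_two_one_add_div_nonneg (hy k) (hR k.succ)]

theorem volume_region_eq_setLIntegral {R : Fin (n + 1) → ℝ} (hR : ∀ k, 0 < R k) :
    volume (region R) =
      ∫⁻ x in Set.Ioo 0 (2 ^ R 0 - 1),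
        volume (region ((1 - logb 2 (1 + x) / R 0) • Fin.tail R)) := by
  rw [volume_region_eq_lintegral, ← setLIntegral_eq_of_support_subset]
  · exact setLIntegral_congr_fun measurableSet_Ioo fun x hx => by rw [setOf_cons_mem_region hR hx]
  · intro x hx
    by_contra hx'
    exact hx (by simp only [setOf_cons_mem_region_eq_empty hR hx', measure_empty])

end Slicing

theorem integral_one_add_rpow {b e : ℝ} (hb : 0 < b) (he : e ≠ -1) :
    ∫ x in (0 : ℝ)..b - 1, (1 + x) ^ e = (b ^ (e + 1) - 1) / (e + 1) := by
  rw [intervalIntegral.integral_comp_add_left (fun x => x ^ e), add_zero, add_sub_cancel,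
    integral_rpow (Or.inr ⟨he, ?_⟩), one_rpow]
  rw [Set.mem_uIcc]
  rintro (⟨h, -⟩ | ⟨h, -⟩) <;> linarith

theorem intervalIntegrable_one_add_rpow (e : ℝ) {b : ℝ} (hb : 0 ≤ b) :
    IntervalIntegrable (fun x => (1 + x) ^ e) volume 0 b := by
  refine ContinuousOn.intervalIntegrable fun x hx => ?_
  rw [Set.uIcc_of_le hb] at hx
  have hx1 : 1 + x ≠ 0 := by linarith [hx.1]
  exact ((continuousAt_const.add continuousAt_id).rpow_const (Or.inl hx1)).continuousWithinAt

theorem intervalIntegrable_sum_mul_one_add_rpow {ι : Type*} (s : Finset ι) (c e : ι → ℝ)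
    {b : ℝ} (hb : 0 ≤ b) :
    IntervalIntegrable (fun x => ∑ p ∈ s, c p * (1 + x) ^ e p) volume 0 b := by
  simpa only [Finset.sum_fn] using IntervalIntegrable.sum s fun p _ =>
    (intervalIntegrable_one_add_rpow (e p) hb).const_mul (c p)

section SliceVolume

variable {n : ℕ}

-- `closedForm` of the scaled tail (`closedForm_smul_tail`), written so that it stays continuous at
-- `x = 2 ^ R 0 - 1`, where the scale factor vanishes and `lagrangeCoeff` turns into junk `0 / 0`.
noncomputable def sliceVolume (R : Fin (n + 1) → ℝ) (x : ℝ) : ℝ :=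
  (-1) ^ n +
    ∑ p, (2 : ℝ) ^ R p.succ * lagrangeCoeff (Fin.tail R) p * (1 + x) ^ (-(R p.succ / R 0))

theorem closedForm_smul_tail (R : Fin (n + 1) → ℝ) {x : ℝ} (hx : -1 < x)
    (hc : 1 - logb 2 (1 + x) / R 0 ≠ 0) :
    closedForm ((1 - logb 2 (1 + x) / R 0) • Fin.tail R) = sliceVolume R x := by
  have hpow : ∀ s : ℝ,
      (2 : ℝ) ^ ((1 - logb 2 (1 + x) / R 0) * s) = 2 ^ s * (1 + x) ^ (-(s / R 0)) := fun s => by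
    rw [show (1 - logb 2 (1 + x) / R 0) * s = s + logb 2 (1 + x) * (-(s / R 0)) by ring,
      rpow_add two_pos, rpow_mul zero_le_two, rpow_logb two_pos one_lt_two.ne' (by linarith)]
  simp only [closedForm, sliceVolume, Pi.smul_apply, smul_eq_mul, hpow, lagrangeCoeff_smul hc]
  exact congrArg _ (sum_congr rfl fun p _ => mul_right_comm _ _ _)

theorem intervalIntegrable_sliceVolume (R : Fin (n + 1) → ℝ) {b : ℝ} (hb : 0 ≤ b) :
    IntervalIntegrable (sliceVolume R) volume 0 b :=
  intervalIntegrable_const.add (intervalIntegrable_sum_mul_one_add_rpow _ _ _ hb)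

theorem integral_sliceVolume {R : Fin (n + 1) → ℝ} (hR0 : 0 < R 0) (hR : Function.Injective R) :
    ∫ x in (0 : ℝ)..2 ^ R 0 - 1, sliceVolume R x = closedForm R := by
  have hM : 0 ≤ (2 : ℝ) ^ R 0 - 1 := by linarith [one_le_rpow one_le_two hR0.le]
  have hne : ∀ p : Fin n, R p.succ ≠ R 0 := fun p => hR.ne (Fin.succ_ne_zero p)
  have hterm : ∀ p : Fin n, (2 : ℝ) ^ R p.succ * lagrangeCoeff (Fin.tail R) p *
      ∫ x in (0 : ℝ)..2 ^ R 0 - 1, (1 + x) ^ (-(R p.succ / R 0)) =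
        (2 ^ R p.succ - 2 ^ R 0) * lagrangeCoeff R p.succ := by
    intro p
    have hsub : R p.succ - R 0 ≠ 0 := sub_ne_zero.2 (hne p)
    have hsub' : R 0 - R p.succ ≠ 0 := sub_ne_zero.2 (hne p).symm
    have he : -(R p.succ / R 0) + 1 = (R 0 - R p.succ) / R 0 := by field_simp; ring
    have hpow : ((2 : ℝ) ^ R 0) ^ ((R 0 - R p.succ) / R 0) = 2 ^ R 0 / 2 ^ R p.succ := by
      rw [← rpow_mul zero_le_two, ← rpow_sub two_pos, mul_div_cancel₀ _ hR0.ne']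
    have h2 : (2 : ℝ) ^ R p.succ ≠ 0 := by positivity
    rw [integral_one_add_rpow (rpow_pos_of_pos two_pos (R 0)), he, hpow, lagrangeCoeff_succ]
    · field_simp
      ring
    · intro h
      exact hne p (by field_simp at h; linarith)
  have hsum := sum_lagrangeCoeff hR
  rw [Fintype.card_fin, Nat.add_sub_cancel, Fin.sum_univ_succ] at hsum
  simp only [sliceVolume]
  rw [intervalIntegral.integral_add intervalIntegrable_const, intervalIntegral.integral_finsetSum]
  · simp only [intervalIntegral.integral_const_mul, intervalIntegral.integral_const, smul_eq_mul,
      hterm, sub_mul, sum_sub_distrib, ← mul_sum, closedForm, Fin.sum_univ_succ]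
    linear_combination (-2 ^ R 0) * hsum
  · exact fun p _ => (intervalIntegrable_one_add_rpow _ hM).const_mul _
  · exact intervalIntegrable_sum_mul_one_add_rpow _ _ _ hM

end SliceVolume

theorem toReal_volume_region {n : ℕ} {R : Fin n → ℝ} (hR : ∀ k, 0 < R k)
    (hinj : Function.Injective R) : (volume (region R)).toReal = closedForm R := by
  induction n with
  | zero => simp [volume_region_of_isEmpty, closedForm]
  | succ n ih =>
    set M : ℝ := 2 ^ R 0 - 1
    have hM : 0 ≤ M := by linarith [one_le_rpow one_le_two (hR 0).le]
    have hslice : ∀ x ∈ Set.Ioo 0 M,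
        volume (region ((1 - logb 2 (1 + x) / R 0) • Fin.tail R)) =
          ENNReal.ofReal (sliceVolume R x) ∧ 0 ≤ sliceVolume R x := by
      intro x hx
      have hc := one_sub_logb_two_one_add_div_pos (hR 0) hx
      have hpos : ∀ k, 0 < ((1 - logb 2 (1 + x) / R 0) • Fin.tail R) k :=
        fun k => mul_pos hc (hR k.succ)
      have hval := ih hpos fun k l hkl =>
        Fin.succ_injective _ (hinj (mul_left_cancel₀ hc.ne' hkl))
      rw [closedForm_smul_tail R (by linarith [hx.1]) hc.ne'] at hval
      rw [← hval, ENNReal.ofReal_toReal (volume_region_lt_top hpos).ne]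
      exact ⟨rfl, ENNReal.toReal_nonneg⟩
    have hint : IntegrableOn (sliceVolume R) (Set.Ioo 0 M) :=
      (intervalIntegrable_iff_integrableOn_Ioo_of_le hM).1 (intervalIntegrable_sliceVolume R hM)
    have hvol : volume (region R) = ENNReal.ofReal (∫ x in Set.Ioo 0 M, sliceVolume R x) := by
      rw [volume_region_eq_setLIntegral hR, ofReal_integral_eq_lintegral_ofReal hint
        ((ae_restrict_iff' measurableSet_Ioo).2 (ae_of_all _ fun x hx => (hslice x hx).2))]
      exact setLIntegral_congr_fun measurableSet_Ioo fun x hx => (hslice x hx).1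
    rw [hvol,
      ENNReal.toReal_ofReal (setIntegral_nonneg measurableSet_Ioo fun x hx => (hslice x hx).2),
      ← integral_Ioc_eq_integral_Ioo, ← intervalIntegral.integral_of_le hM,
      integral_sliceVolume (hR 0) hinj]

theorem gK_closed_form_general (K : ℕ) (R : Fin K → ℝ)
    (hR : ∀ k, 0 < R k) (hdist : ∀ k l, k ≠ l → R k ≠ R l) :
    gK K R = (-1 : ℝ) ^ K +
      ∑ p, (2 : ℝ) ^ (R p) * ∏ k ∈ univ.erase p, R k / (R p - R k) :=
  toReal_volume_region hR (Function.injective_iff_pairwise_ne.2 hdist)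

theorem gK_closed_form (K : ℕ) (hK : 1 ≤ K) (R : Fin K → ℝ)
    (hR : ∀ k, 0 < R k) (hdist : ∀ k l, k ≠ l → R k ≠ R l) :
    gK K R = (-1 : ℝ) ^ K +
      ∑ p, (2 : ℝ) ^ (R p) * ∏ k ∈ univ.erase p, R k / (R p - R k) :=
  gK_closed_form_general K R hR hdist
end

section
/- Let p : ℝ → ℝ be a function that is convex, nonnegative, and monotonically nondecreasing on the interval (0,∞). Then the function x ↦ x · (1 − p(x)) is concave on (0,∞). -/
/-! Write `x (1 - p x) = x - x p x`. Since `x ↦ x` and `p` are both convex, nonnegative and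
nondecreasing, they monovary, so their product `x ↦ x p x` is convex; subtracting it from the linear
function `x ↦ x` leaves a concave function. -/

open Set

section

variable {𝕜 : Type*} [Field 𝕜] [LinearOrder 𝕜] [IsStrictOrderedRing 𝕜] {s : Set 𝕜} {p : 𝕜 → 𝕜}

lemma ConvexOn.id_mul (hs : Convex 𝕜 s) (hs₀ : s ⊆ Ici 0) (hp : ConvexOn 𝕜 s p)
    (hp₀ : ∀ x ∈ s, 0 ≤ p x) (hp_mono : MonotoneOn p s) :
    ConvexOn 𝕜 s (fun x => x * p x) :=
  (convexOn_id hs).mul hp (fun _ hx => hs₀ hx) hp₀ (monotoneOn_id.monovaryOn hp_mono)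

lemma ConvexOn.concaveOn_id_mul_one_sub (hs : Convex 𝕜 s) (hs₀ : s ⊆ Ici 0)
    (hp : ConvexOn 𝕜 s p) (hp₀ : ∀ x ∈ s, 0 ≤ p x) (hp_mono : MonotoneOn p s) :
    ConcaveOn 𝕜 s (fun x => x * (1 - p x)) :=
  ((concaveOn_id hs).sub (hp.id_mul hs hs₀ hp₀ hp_mono)).congr fun x _ => by
    simp only [Pi.sub_apply, id, mul_sub, mul_one]

end

theorem concave_rate_times_success (p : ℝ → ℝ)
    (hconv : ConvexOn ℝ (Set.Ioi (0 : ℝ)) p)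
    (hnonneg : ∀ x ∈ Set.Ioi (0 : ℝ), 0 ≤ p x)
    (hmono : MonotoneOn p (Set.Ioi (0 : ℝ))) :
    ConcaveOn ℝ (Set.Ioi (0 : ℝ)) (fun x => x * (1 - p x)) :=
  hconv.concaveOn_id_mul_one_sub (convex_Ioi 0) Ioi_subset_Ici_self hnonneg hmono
end
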